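/- Let F be a field such that the canonical ring homomorphism ℤ →+* F (sending an integer n to n · 1) is injective, and such that the map from ℤ × ℤ to F sending (p, q) to (p : F) * (q : F)⁻¹ is surjective. Then F is isomorphic as a ring (hence as a field) to ℚ. -/

import Mathlib

theorem Rat.cast_surjective_of_surjective_intCast_mul_inv {F : Type*} [DivisionRing F] [CharZero F]
    (h : Function.Surjective (fun p : ℤ × ℤ => (p.1 : F) * (p.2 : F)⁻¹)) :
    Function.Surjective ((↑) : ℚ → F) := by
  intro x
  obtain ⟨⟨p, q⟩, rfl⟩ := h x
  exact ⟨p / q, by push_cast; rw [div_eq_mul_inv]⟩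

/-- Any field of integral fractions is isomorphic to `ℚ`: if `F` is a field such
that the canonical ring homomorphism `ℤ →+* F` is injective and every element of
`F` is a fraction `p * q⁻¹` of (images of) integers, then `F` is isomorphic as a
ring (hence as a field) to `ℚ`. -/
theorem rationals_unique {F : Type*} [Field F]
    (hinj : Function.Injective (Int.castRingHom F))
    (hsurj : Function.Surjective (fun p : ℤ × ℤ => (p.1 : F) * (p.2 : F)⁻¹)) :
    Nonempty (F ≃+* ℚ) := by
  have : CharZero F := (RingHom.charZero_iff hinj).mp inferInstance
  have hbij : Function.Bijective (Rat.castHom F) :=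
    ⟨(Rat.castHom F).injective, Rat.cast_surjective_of_surjective_intCast_mul_inv hsurj⟩
  exact ⟨(RingEquiv.ofBijective _ hbij).symm⟩
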